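/- arXiv:math/0211118 — 3 statements merged into one kernel-verified Lean document; each statement's English description precedes it below -/
import Mathlib

section
/- Let G be a group with normal subgroups G₁ and G₂ such that the quotient groups G/G₁ and G/G₂ are both finite and abelian. Let α be an automorphism of G such that α(G₁) ⊆ G₁ and α(G₂) ⊆ G₂. Suppose that the automorphism induced by α on G/G₁ is the identity, and that the automorphism induced by α on G/G₂ is x ↦ x^m for an integer m such that m − 1 is coprime to the order of G/G₂. Then every coset of G₁ in G meets every coset of G₂ in G; equivalently, G₁ · G₂ = G. -/
/-- **Goursat-type lemma.** Let `G` be a group with normal subgroups `G₁`, `G₂` with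
finite abelian quotients, and `α` an automorphism of `G` preserving `G₁` and `G₂`,
acting trivially on `G ⧸ G₁` and as the scalar `m` on `G ⧸ G₂`, where `m - 1` is
coprime to the order of `G ⧸ G₂`. Then every coset of `G₁` meets every coset of `G₂`. -/
theorem stmt0 {G : Type*} [Group G] (G₁ G₂ : Subgroup G) [G₁.Normal] [G₂.Normal]
    [Finite (G ⧸ G₁)] [Finite (G ⧸ G₂)]
    (hab₁ : ∀ x y : G ⧸ G₁, x * y = y * x)
    (hab₂ : ∀ x y : G ⧸ G₂, x * y = y * x)
    (α : G ≃* G)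
    (hα₁ : ∀ g ∈ G₁, α g ∈ G₁) (hα₂ : ∀ g ∈ G₂, α g ∈ G₂)
    (htriv : ∀ g : G, (↑(α g) : G ⧸ G₁) = (↑g : G ⧸ G₁))
    (m : ℤ)
    (hscal : ∀ g : G, (↑(α g) : G ⧸ G₂) = (↑g : G ⧸ G₂) ^ m)
    (hcop : IsCoprime (m - 1) (Nat.card (G ⧸ G₂) : ℤ)) :
    ∀ a b : G, ∃ x : G, a⁻¹ * x ∈ G₁ ∧ b⁻¹ * x ∈ G₂ := by
  intro a b
  obtain ⟨u, v, huv⟩ := hcop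
  set t : G ⧸ G₂ := ↑(a⁻¹ * b) with ht
  obtain ⟨g, hg⟩ := QuotientGroup.mk_surjective (t ^ u)
  set c : G := α g * g⁻¹ with hc
  have hc1 : c ∈ G₁ := by
    rw [← QuotientGroup.eq_one_iff]
    have : (↑c : G ⧸ G₁) = ↑(α g) * (↑g)⁻¹ := by
      simp [hc]
    rw [this, htriv g, mul_inv_cancel]
  have horder : t ^ (Nat.card (G ⧸ G₂) : ℤ) = 1 := by
    rw [zpow_natCast]
    exact pow_card_eq_one'
  have hc2 : (↑c : G ⧸ G₂) = t := by
    have e1 : (↑c : G ⧸ G₂) = ↑(α g) * (↑g)⁻¹ := by simp [hc]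
    have e2 : (↑c : G ⧸ G₂) = t ^ (u * (m - 1)) := by
      rw [e1, hscal g, hg, ← zpow_mul, ← zpow_neg_one, ← zpow_mul, ← zpow_add]
      congr 1
      ring
    rw [e2]
    calc t ^ (u * (m - 1)) = t ^ (u * (m - 1)) * (t ^ (Nat.card (G ⧸ G₂) : ℤ)) ^ v := by
          rw [horder]; simp
      _ = t ^ (u * (m - 1) + (Nat.card (G ⧸ G₂) : ℤ) * v) := by
          rw [← zpow_mul, ← zpow_add]
      _ = t ^ (1 : ℤ) := by
          congr 1; linear_combination huv
      _ = t := zpow_one t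
  refine ⟨a * c, ?_, ?_⟩
  · simpa using hc1
  · rw [← QuotientGroup.eq_one_iff]
    have e : (↑(b⁻¹ * (a * c)) : G ⧸ G₂) = (↑b)⁻¹ * ↑a * ↑c := by
      simp [QuotientGroup.mk_mul, mul_assoc]
    rw [e, hc2, ht]
    simp only [QuotientGroup.mk_mul, QuotientGroup.mk_inv]
    group
end

section
/- Let G be a finitely generated abelian group, H a subgroup of G, and Q an element of G. Then either there exists a positive integer k with k·Q ∈ H, or there exists a positive integer n such that for all integers m ≥ n and all h ∈ H, the element h − Q does not lie in m·G = {m·g : g ∈ G}. -/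
/-!
If `Q` has finite order in `G ⧸ H`, some positive multiple of `Q` lies in `H`. Otherwise, since
`G ⧸ H` modulo its torsion is a free abelian group of finite rank, there is a homomorphism
`f : G →+ ℤ` killing `H` with `f Q ≠ 0`. Applying `f` to `h - Q = m • g` gives `m ∣ f Q`, so
`m ≤ |f Q|`, and `n = |f Q| + 1` works.
-/

open Module

theorem Module.exists_dual_ne_zero_of_notMem_torsion {R M : Type*} [CommRing R] [IsDomain R]
    [IsPrincipalIdealRing R] [AddCommGroup M] [Module R M] [Module.Finite R M] {x : M}
    (hx : x ∉ Submodule.torsion R M) : ∃ f : Dual R M, f x ≠ 0 := by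
  have hx' : (Submodule.torsion R M).mkQ x ≠ 0 := by
    simpa [Submodule.Quotient.mk_eq_zero] using hx
  obtain ⟨g, hg⟩ := Projective.exists_dual_ne_zero R hx'
  exact ⟨g ∘ₗ (Submodule.torsion R M).mkQ, hg⟩

theorem AddSubgroup.exists_addMonoidHom_int_of_not_isOfFinAddOrder {G : Type*} [AddCommGroup G]
    [AddGroup.FG G] (H : AddSubgroup G) {Q : G} (hQ : ¬IsOfFinAddOrder (Q : G ⧸ H)) :
    ∃ f : G →+ ℤ, H ≤ f.ker ∧ f Q ≠ 0 := by
  have hQ' : (Q : G ⧸ H) ∉ Submodule.torsion ℤ (G ⧸ H) := by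
    rwa [← Submodule.mem_toAddSubgroup, Submodule.torsion_int, AddCommGroup.mem_torsion]
  obtain ⟨f, hf⟩ := Module.exists_dual_ne_zero_of_notMem_torsion hQ'
  refine ⟨f.toAddMonoidHom.comp (QuotientAddGroup.mk' H), fun h hh => ?_, hf⟩
  simp [(QuotientAddGroup.eq_zero_iff h).mpr hh]

theorem AddMonoidHom.not_exists_sub_eq_zsmul_of_abs_lt {G : Type*} [AddCommGroup G] (f : G →+ ℤ)
    {h Q : G} (hh : f h = 0) (hQ : f Q ≠ 0) {m : ℤ} (hm : |f Q| < m) :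
    ¬∃ g : G, h - Q = m • g := by
  rintro ⟨g, hg⟩
  have hdvd : m ∣ f Q := ⟨-f g, by simpa [hh, mul_comm, neg_eq_iff_eq_neg] using congrArg f hg⟩
  exact (Int.le_of_dvd (abs_pos.mpr hQ) ((dvd_abs m (f Q)).mpr hdvd)).not_gt hm

theorem QuotientAddGroup.exists_pos_nsmul_mem_of_isOfFinAddOrder {G : Type*} [AddCommGroup G]
    {H : AddSubgroup G} {Q : G} (hQ : IsOfFinAddOrder (Q : G ⧸ H)) :
    ∃ k : ℕ, 0 < k ∧ k • Q ∈ H := by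
  obtain ⟨k, hk, hkQ⟩ := hQ.exists_nsmul_eq_zero
  exact ⟨k, hk, (QuotientAddGroup.eq_zero_iff _).mp (by simpa using hkQ)⟩

/-- Let `G` be a finitely generated abelian group, `H` a subgroup and `Q ∈ G`. Either
some positive multiple of `Q` lies in `H`, or there is a positive integer `n` such that
for all integers `m ≥ n` and all `h ∈ H`, the element `h - Q` is not an `m`-th multiple. -/
theorem stmt2 {G : Type*} [AddCommGroup G] [AddGroup.FG G]
    (H : AddSubgroup G) (Q : G) :
    (∃ k : ℕ, 0 < k ∧ (k : ℤ) • Q ∈ H) ∨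
    (∃ n : ℤ, 0 < n ∧ ∀ m : ℤ, n ≤ m → ∀ h ∈ H, ¬ ∃ g : G, h - Q = m • g) := by
  by_cases hQ : IsOfFinAddOrder (Q : G ⧸ H)
  · obtain ⟨k, hk, hkQ⟩ := QuotientAddGroup.exists_pos_nsmul_mem_of_isOfFinAddOrder hQ
    exact Or.inl ⟨k, hk, by rwa [natCast_zsmul]⟩
  · obtain ⟨f, hHf, hfQ⟩ := H.exists_addMonoidHom_int_of_not_isOfFinAddOrder hQ
    refine Or.inr ⟨|f Q| + 1, by positivity, fun m hm h hh => ?_⟩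
    exact f.not_exists_sub_eq_zsmul_of_abs_lt (hHf hh) hfQ (by omega)
end

section
/- Let n be a positive integer and let E be a subring of the matrix ring Mₙ(ℤ) such that the ℚ-subalgebra of Mₙ(ℚ) generated by (the image of) E is a semisimple ring. Let E* be the centralizer of E in Mₙ(ℤ) and E** the centralizer of E* in Mₙ(ℤ) (the double centralizer). Then E ⊆ E** and E has finite index in E** as an additive subgroup; in particular, for all but finitely many primes ℓ, the images of E and of E** under entrywise reduction modulo ℓ in Mₙ(𝔽_ℓ) coincide. -/
/-!
Let `A ⊆ Mₙ(ℚ)` be the `ℚ`-algebra generated by `E` and let `x ∈ E**`. Every `y` commuting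
with `A` has a nonzero integer multiple that is an integral matrix commuting with `E`, hence
with `x`; so `x` lies in the double centralizer of `A` in `Mₙ(ℚ)`, which equals `A` by the
Jacobson density theorem for the semisimple ring `A` acting on `ℚⁿ`. Since `A` is the `ℚ`-span
of `E`, some nonzero multiple of `x` lies in `E`. Thus `E**/E` is a finitely generated torsion
abelian group, hence finite of some order `d`, and `d • E** ⊆ E`. For a prime `ℓ ∤ d`,
multiplication by `d` is invertible modulo `ℓ`, so `E` and `E**` have the same image there.
-/

open Matrix

theorem Matrix.subalgebra_centralizer_centralizer_eq {K n : Type*} [CommRing K] [Fintype n]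
    [DecidableEq n] (A : Subalgebra K (Matrix n n K)) [IsSemisimpleRing A] :
    Subalgebra.centralizer K (Subalgebra.centralizer K (A : Set (Matrix n n K))) = A := by
  classical
  refine le_antisymm (fun f hf => ?_) (Subalgebra.le_centralizer_centralizer K)
  rw [Subalgebra.mem_centralizer_iff] at hf
  -- `End_A(Kⁿ)` is the centralizer of `A`, so `f` is `End_A(Kⁿ)`-linear and density applies.
  have hcomm : ∀ g : Module.End A (n → K), ∀ v, f *ᵥ g v = g (f *ᵥ v) := by
    intro g v
    set G := LinearMap.toMatrix' (g.restrictScalars K)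
    have hG : ∀ v, g v = G *ᵥ v := fun v => by simp [G]
    have hGA : G ∈ Subalgebra.centralizer K (A : Set (Matrix n n K)) := by
      rw [Subalgebra.mem_centralizer_iff]
      intro a ha
      refine Matrix.ext_of_mulVec_single fun i => ?_
      rw [← mulVec_mulVec, ← mulVec_mulVec, ← hG, ← hG]
      exact (g.map_smul ⟨a, ha⟩ _).symm
    rw [hG, hG, mulVec_mulVec, mulVec_mulVec, hf G hGA]
  let F : Module.End (Module.End A (n → K)) (n → K) :=
    { toFun := (f *ᵥ ·)
      map_add' := mulVec_add f
      map_smul' := hcomm }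
  obtain ⟨r, hr⟩ := jacobson_density F (Finset.univ.image fun i => Pi.single i 1)
  convert r.2
  refine Matrix.ext_of_mulVec_single fun i => ?_
  exact hr _ (Finset.mem_image_of_mem _ (Finset.mem_univ i))

theorem Matrix.exists_map_algebraMap_eq_smul {R S m n : Type*} [CommRing R] [CommRing S]
    [Algebra R S] (M : Submonoid R) [IsLocalization M S] [Finite m] [Finite n]
    (y : Matrix m n S) : ∃ b : M, ∃ z : Matrix m n R, z.map (algebraMap R S) = (b : R) • y := by
  obtain ⟨b, hb⟩ :=
    IsLocalization.exist_integer_multiples_of_finite M fun ij : m × n => y ij.1 ij.2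
  choose z hz using hb
  exact ⟨b, Matrix.of fun i j => z (i, j), Matrix.ext fun i j => hz (i, j)⟩

theorem AddSubgroup.relIndex_ne_zero_of_forall_zsmul_mem {M : Type*} [AddCommGroup M]
    {H K : AddSubgroup M} (hK : K.FG) (h : ∀ x ∈ K, ∃ d : ℤ, d ≠ 0 ∧ d • x ∈ H) :
    H.relIndex K ≠ 0 := by
  have : AddGroup.FG K := (AddGroup.fg_iff_addSubgroup_fg K).mpr hK
  have : Module.Finite ℤ (K ⧸ H.addSubgroupOf K) := Module.Finite.iff_addGroup_fg.mpr
    (AddGroup.fg_of_surjective (QuotientAddGroup.mk'_surjective _))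
  have : Finite (K ⧸ H.addSubgroupOf K) := Module.finite_of_fg_torsion _ fun q => by
    induction q using QuotientAddGroup.induction_on with
    | H x =>
      obtain ⟨d, hd, hdx⟩ := h x x.2
      refine ⟨⟨d, mem_nonZeroDivisors_of_ne_zero hd⟩, ?_⟩
      rw [Submonoid.mk_smul, ← QuotientAddGroup.mk_zsmul, QuotientAddGroup.eq_zero_iff]
      exact hdx
  exact AddSubgroup.index_ne_zero_of_finite

theorem AddSubgroup.map_eq_map_of_isUnit_relIndex {M N : Type*} [AddCommGroup M]
    [AddCommGroup N] {p : ℕ} [Module (ZMod p) N] {H K : AddSubgroup M} (hHK : H ≤ K)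
    (ψ : M →+ N) (hd : IsUnit (H.relIndex K : ZMod p)) : H.map ψ = K.map ψ := by
  refine le_antisymm (AddSubgroup.map_mono hHK) ?_
  rintro _ ⟨x, hx, rfl⟩
  let c : ℤ := (hd.unit⁻¹ : (ZMod p)ˣ).val.cast
  refine ⟨c • H.relIndex K • x, H.zsmul_mem (H.nsmul_relIndex_mem hx) c, ?_⟩
  rw [map_zsmul, map_nsmul, ← Nat.cast_smul_eq_nsmul (ZMod p), ← Int.cast_smul_eq_zsmul (ZMod p),
    smul_smul]
  simp [c, ZMod.intCast_cast]

section IntegralMatrices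

variable {n : Type*} [Fintype n] [DecidableEq n]

theorem exists_zsmul_mem_of_mem_adjoin {E : Subring (Matrix n n ℤ)} {x : Matrix n n ℤ}
    (hx : (Int.castRingHom ℚ).mapMatrix x ∈
      Algebra.adjoin ℚ (E.map (Int.castRingHom ℚ).mapMatrix : Set (Matrix n n ℚ))) :
    ∃ d : ℤ, d ≠ 0 ∧ d • x ∈ E := by
  set φ := (Int.castRingHom ℚ).mapMatrix (m := n)
  rw [← Subalgebra.mem_toSubmodule, Algebra.adjoin_eq_span, ← Subring.coe_toSubmonoid,
    Submonoid.closure_eq, IsLocalization.mem_span_iff (nonZeroDivisors ℤ)] at hx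
  obtain ⟨y, hy, d, hxy⟩ := hx
  refine ⟨d, nonZeroDivisors.coe_ne_zero d, ?_⟩
  rw [show ((E.map φ).toSubmonoid : Set (Matrix n n ℚ)) =
    ((E.map φ).toAddSubgroup.toIntSubmodule : Set (Matrix n n ℚ)) from rfl, Submodule.span_eq] at hy
  obtain ⟨z, hz, rfl⟩ := hy
  have hφ : Function.Injective φ := Matrix.map_injective Int.cast_injective
  suffices (d : ℤ) • x = z by rwa [this]
  apply hφ
  rw [map_zsmul, hxy, ← Int.cast_smul_eq_zsmul ℚ, smul_smul, ← eq_intCast (algebraMap ℤ ℚ),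
    IsLocalization.mk'_spec', map_one, one_smul]

theorem mapMatrix_mem_adjoin_of_mem_centralizer_centralizer {E : Subring (Matrix n n ℤ)}
    [IsSemisimpleRing
      (Algebra.adjoin ℚ (E.map (Int.castRingHom ℚ).mapMatrix : Set (Matrix n n ℚ)))]
    {x : Matrix n n ℤ}
    (hx : x ∈ Subring.centralizer (Subring.centralizer (E : Set (Matrix n n ℤ)) : Set _)) :
    (Int.castRingHom ℚ).mapMatrix x ∈
      Algebra.adjoin ℚ (E.map (Int.castRingHom ℚ).mapMatrix : Set (Matrix n n ℚ)) := by
  set φ := (Int.castRingHom ℚ).mapMatrix (m := n)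
  have hφ : Function.Injective φ := Matrix.map_injective Int.cast_injective
  rw [← Matrix.subalgebra_centralizer_centralizer_eq (Algebra.adjoin ℚ _),
    Subalgebra.mem_centralizer_iff]
  intro y hy
  rw [Subalgebra.coe_centralizer, Set.mem_centralizer_iff] at hy
  obtain ⟨d, z, hz⟩ := Matrix.exists_map_algebraMap_eq_smul (nonZeroDivisors ℤ) y
  replace hz : φ z = ((d : ℤ) : ℚ) • y := by
    rw [Int.cast_smul_eq_zsmul, ← hz, algebraMap_int_eq]; rfl
  have hzE : z ∈ Subring.centralizer (E : Set (Matrix n n ℤ)) := by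
    refine Subring.mem_centralizer_iff.mpr fun w hw => hφ ?_
    rw [map_mul, map_mul, hz, mul_smul_comm, smul_mul_assoc,
      hy _ (Algebra.subset_adjoin ⟨w, hw, rfl⟩)]
  have hxz := congrArg φ (Subring.mem_centralizer_iff.mp hx z hzE)
  rw [map_mul, map_mul, hz, mul_smul_comm, smul_mul_assoc] at hxz
  exact smul_right_injective _ (Int.cast_ne_zero.mpr (nonZeroDivisors.coe_ne_zero d)) hxz

end IntegralMatrices

theorem stmt6_general (n : ℕ) (E : Subring (Matrix (Fin n) (Fin n) ℤ))
    (hss : IsSemisimpleRing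
      (Algebra.adjoin ℚ
        ((E.map (Int.castRingHom ℚ).mapMatrix : Subring (Matrix (Fin n) (Fin n) ℚ)) :
          Set (Matrix (Fin n) (Fin n) ℚ)))) :
    E ≤ Subring.centralizer
        ((Subring.centralizer (E : Set (Matrix (Fin n) (Fin n) ℤ))) :
          Set (Matrix (Fin n) (Fin n) ℤ)) ∧
    E.toAddSubgroup.relIndex
        (Subring.centralizer
          ((Subring.centralizer (E : Set (Matrix (Fin n) (Fin n) ℤ))) :
            Set (Matrix (Fin n) (Fin n) ℤ))).toAddSubgroup ≠ 0 ∧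
    {ℓ : ℕ | ℓ.Prime ∧
      E.map (Int.castRingHom (ZMod ℓ)).mapMatrix ≠
        (Subring.centralizer
          ((Subring.centralizer (E : Set (Matrix (Fin n) (Fin n) ℤ))) :
            Set (Matrix (Fin n) (Fin n) ℤ))).map
          (Int.castRingHom (ZMod ℓ)).mapMatrix}.Finite := by
  set T := Subring.centralizer (Subring.centralizer (E : Set (Matrix (Fin n) (Fin n) ℤ)) :
    Set (Matrix (Fin n) (Fin n) ℤ))
  have hET : E ≤ T := fun _ hx => Set.subset_centralizer_centralizer hx
  set d := E.toAddSubgroup.relIndex T.toAddSubgroup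
  have hd : d ≠ 0 :=
    AddSubgroup.relIndex_ne_zero_of_forall_zsmul_mem
      ((Submodule.fg_iff_addSubgroup_fg T.toAddSubgroup.toIntSubmodule).mp
        (IsNoetherian.noetherian _))
      fun x hx => exists_zsmul_mem_of_mem_adjoin
        (mapMatrix_mem_adjoin_of_mem_centralizer_centralizer hx)
  refine ⟨hET, hd, d.divisors.finite_toSet.subset fun ℓ ⟨hℓ, hne⟩ => ?_⟩
  rw [Finset.mem_coe, Nat.mem_divisors]
  refine ⟨by_contra fun hdvd => hne ?_, hd⟩
  have : Fact ℓ.Prime := ⟨hℓ⟩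
  have hunit : IsUnit (d : ZMod ℓ) :=
    isUnit_iff_ne_zero.mpr ((ZMod.natCast_eq_zero_iff _ _).not.mpr hdvd)
  have hmap := congrArg SetLike.coe <| AddSubgroup.map_eq_map_of_isUnit_relIndex hET
    (Int.castRingHom (ZMod ℓ)).mapMatrix.toAddMonoidHom hunit
  exact SetLike.coe_injective hmap

/-- Let `E` be a subring of `Mₙ(ℤ)` such that the `ℚ`-subalgebra of `Mₙ(ℚ)` generated by
`E` is semisimple. Let `E*` be the centralizer of `E` in `Mₙ(ℤ)` and `E**` the double
centralizer. Then `E ⊆ E**`, `E` has finite index in `E**` as an additive subgroup, and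
for all but finitely many primes `ℓ` the images of `E` and `E**` in `Mₙ(𝔽_ℓ)` coincide. -/
theorem stmt6 (n : ℕ) (hn : 0 < n) (E : Subring (Matrix (Fin n) (Fin n) ℤ))
    (hss : IsSemisimpleRing
      (Algebra.adjoin ℚ
        ((E.map (Int.castRingHom ℚ).mapMatrix : Subring (Matrix (Fin n) (Fin n) ℚ)) :
          Set (Matrix (Fin n) (Fin n) ℚ)))) :
    E ≤ Subring.centralizer
        ((Subring.centralizer (E : Set (Matrix (Fin n) (Fin n) ℤ))) :
          Set (Matrix (Fin n) (Fin n) ℤ)) ∧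
    E.toAddSubgroup.relIndex
        (Subring.centralizer
          ((Subring.centralizer (E : Set (Matrix (Fin n) (Fin n) ℤ))) :
            Set (Matrix (Fin n) (Fin n) ℤ))).toAddSubgroup ≠ 0 ∧
    {ℓ : ℕ | ℓ.Prime ∧
      E.map (Int.castRingHom (ZMod ℓ)).mapMatrix ≠
        (Subring.centralizer
          ((Subring.centralizer (E : Set (Matrix (Fin n) (Fin n) ℤ))) :
            Set (Matrix (Fin n) (Fin n) ℤ))).map
          (Int.castRingHom (ZMod ℓ)).mapMatrix}.Finite :=
  stmt6_general n E hss
end
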